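/- arXiv:2510.27284 — 4 statements merged into one kernel-verified Lean document; each statement's English description precedes it below -/
import Mathlib

section
/- Let q_n denote the denominator of the n-th convergent of the continued fraction [a_1,...,a_n] with all a_i positive integers, defined by q_{-1}=0, q_0=1, q_{n+1}=a_{n+1}q_n + q_{n-1}. Then for all n,k ≥ 1 and all positive integers a_1,...,a_{n+k}, 1 ≤ q_{n+k}(a_1,...,a_{n+k}) / (q_n(a_1,...,a_n)·q_k(a_{n+1},...,a_{n+k})) ≤ 2. -/
/-- The continuant: `contDen [a₁, …, aₙ]` is the denominator `qₙ(a₁, …, aₙ)` of the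
continued fraction `[a₁, …, aₙ]`, defined by `q₋₁ = 0`, `q₀ = 1`,
`q_{j+1} = a_{j+1} q_j + q_{j-1}`. -/
def contDen : List ℕ → ℕ
  | [] => 1
  | [a] => a
  | a :: b :: l => a * contDen (b :: l) + contDen l

/-- Companion continuant: `contE l = contDen l.dropLast` for nonempty `l`, `0` for `[]`. -/
def contE : List ℕ → ℕ
  | [] => 0
  | [_] => 1
  | a :: b :: l => a * contE (b :: l) + contE l

theorem contDen_append_eq (l₂ : List ℕ) (h : l₂ ≠ []) :
    ∀ l₁, contDen (l₁ ++ l₂) = contDen l₁ * contDen l₂ + contE l₁ * contDen l₂.tail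
  | [] => by simp [contDen, contE]
  | [a] => by
    cases l₂ with
    | nil => exact absurd rfl h
    | cons c rest => simp [contDen, contE]
  | a :: b :: l => by
    have h1 := contDen_append_eq l₂ h (b :: l)
    have h2 := contDen_append_eq l₂ h l
    simp only [List.cons_append] at *
    simp only [contDen, contE, h1, h2]
    ring

theorem contE_le_contDen : ∀ l : List ℕ, (∀ a ∈ l, 1 ≤ a) → contE l ≤ contDen l
  | [], _ => by simp [contDen, contE]
  | [a], h => by simpa [contDen, contE] using h a (by simp)
  | a :: b :: l, h => by
    have h1 := contE_le_contDen (b :: l) (fun x hx => h x (by simp [hx]))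
    have h2 := contE_le_contDen l (fun x hx => h x (by simp [hx]))
    simp only [contDen, contE]
    exact Nat.add_le_add (Nat.mul_le_mul_left a h1) h2

theorem one_le_contDen : ∀ l : List ℕ, (∀ a ∈ l, 1 ≤ a) → 1 ≤ contDen l
  | [], _ => le_refl _
  | [a], h => h a (by simp)
  | a :: b :: l, h => by
    have h1 := one_le_contDen (b :: l) (fun x hx => h x (by simp at *; tauto))
    have ha := h a (by simp)
    simp only [contDen]
    calc 1 ≤ a * contDen (b :: l) := Nat.one_le_iff_ne_zero.2 (Nat.mul_ne_zero (by omega) (by omega))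
    _ ≤ _ := Nat.le_add_right _ _

theorem contDen_tail_le : ∀ l : List ℕ, (∀ a ∈ l, 1 ≤ a) → contDen l.tail ≤ contDen l
  | [], _ => le_refl _
  | [a], h => by simpa [contDen] using h a (by simp)
  | a :: b :: l, h => by
    have ha := h a (by simp)
    simp only [List.tail_cons, contDen]
    calc contDen (b :: l) = 1 * contDen (b :: l) := (one_mul _).symm
    _ ≤ a * contDen (b :: l) := Nat.mul_le_mul_right _ ha
    _ ≤ _ := Nat.le_add_right _ _

/-- for nonempty words of positive integers,
`1 ≤ q_{n+k}(a₁,…,a_{n+k}) / (qₙ(a₁,…,aₙ) q_k(a_{n+1},…,a_{n+k})) ≤ 2`. -/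
theorem contDen_append_bounds (l₁ l₂ : List ℕ) (h₁ : l₁ ≠ []) (h₂ : l₂ ≠ [])
    (hp₁ : ∀ a ∈ l₁, 1 ≤ a) (hp₂ : ∀ a ∈ l₂, 1 ≤ a) :
    contDen l₁ * contDen l₂ ≤ contDen (l₁ ++ l₂) ∧
      contDen (l₁ ++ l₂) ≤ 2 * (contDen l₁ * contDen l₂) := by
  rw [contDen_append_eq l₂ h₂ l₁]
  constructor
  · exact Nat.le_add_right _ _
  · have hE := contE_le_contDen l₁ hp₁
    have hT := contDen_tail_le l₂ hp₂
    have : contE l₁ * contDen l₂.tail ≤ contDen l₁ * contDen l₂ :=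
      Nat.mul_le_mul hE hT
    omega
end

section
/- Let I_n = I_n(a_1,...,a_n) be a cylinder set of order n of the continued fraction expansion and M a positive integer. Let J = ∪_{a_{n+1} ≥ M} I_{n+1}(a_1,...,a_n,a_{n+1}). Then (1/M)·L(I_n) ≤ L(J) ≤ (2/M)·L(I_n), where L is Lebesgue measure. -/
open Filter MeasureTheory Set

/-- The Gauss map `T(x) = {1/x}` (with `T(0) = 0`). -/
noncomputable def gaussMap (x : ℝ) : ℝ := Int.fract x⁻¹

/-- `cfA x n` is the `n`-th partial quotient `aₙ(x)` of the continued fraction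
expansion of `x` (for `n ≥ 1`): `aₙ(x) = ⌊1 / T^{n-1}(x)⌋`. -/
noncomputable def cfA (x : ℝ) (n : ℕ) : ℕ := ⌊(gaussMap^[n - 1] x)⁻¹⌋₊

/-- Continued fraction numerators, shifted by one: `contP d (n+1) = pₙ(d₁,…,dₙ)`,
with `p₋₁ = 1`, `p₀ = 0`, `p_{j+1} = d_{j+1} p_j + p_{j-1}`. -/
def contP (d : ℕ → ℕ) : ℕ → ℕ
  | 0 => 1
  | 1 => 0
  | n + 2 => d (n + 1) * contP d (n + 1) + contP d n

/-- Continued fraction denominators, shifted by one: `contQ d (n+1) = qₙ(d₁,…,dₙ)`,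
with `q₋₁ = 0`, `q₀ = 1`, `q_{j+1} = d_{j+1} q_j + q_{j-1}`. -/
def contQ (d : ℕ → ℕ) : ℕ → ℕ
  | 0 => 0
  | 1 => 1
  | n + 2 => d (n + 1) * contQ d (n + 1) + contQ d n

/-- The `n`-th cylinder `Iₙ(d₁,…,dₙ) = {x ∈ [0,1) : aᵢ(x) = dᵢ, 1 ≤ i ≤ n}`. -/
noncomputable def cyl (n : ℕ) (d : ℕ → ℕ) : Set ℝ :=
  {x | x ∈ Set.Ico (0 : ℝ) 1 ∧ ∀ i, 1 ≤ i → i ≤ n → cfA x i = d i}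

/-!
The cylinder `Iₙ` is, up to its endpoints, the image of `(0, 1)` under the Möbius map
`t ↦ (pₙ + t pₙ₋₁) / (qₙ + t qₙ₋₁)`, which inverts `Tⁿ` on `Iₙ`; as `aₙ₊₁(x) ≥ M` iff
`Tⁿx ≤ 1/M`, the set `J` is likewise the image of `(0, 1/M)`. Since
`pₙ₋₁ qₙ - pₙ qₙ₋₁ = ±1`, the image of `[a, b]` has length
`(b - a) / ((qₙ + a qₙ₋₁)(qₙ + b qₙ₋₁))`, so `L(Iₙ) = 1 / (qₙ (qₙ + qₙ₋₁))` and
`L(J) = 1 / (qₙ (M qₙ + qₙ₋₁))`; the bounds follow from `0 ≤ qₙ₋₁ ≤ qₙ`.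
-/

section ContinuedFraction

variable {d : ℕ → ℕ}

lemma contQ_succ_pos (hd : ∀ i, 1 ≤ d i) (n : ℕ) : 0 < contQ d (n + 1) := by
  induction n with
  | zero => simp [contQ]
  | succ k ih =>
    show 0 < d (k + 1) * contQ d (k + 1) + contQ d k
    have := hd (k + 1)
    positivity

lemma contQ_le_contQ_succ (hd : ∀ i, 1 ≤ d i) : ∀ n, contQ d n ≤ contQ d (n + 1)
  | 0 => by simp [contQ]
  | k + 1 => by
    show contQ d (k + 1) ≤ d (k + 1) * contQ d (k + 1) + contQ d k
    nlinarith [hd (k + 1)]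

lemma contP_mul_contQ_succ_sub (d : ℕ → ℕ) (n : ℕ) :
    (contP d n : ℤ) * contQ d (n + 1) - contP d (n + 1) * contQ d n = (-1) ^ n := by
  induction n with
  | zero => simp [contP, contQ]
  | succ k ih =>
    simp only [contP, contQ, pow_succ]
    push_cast
    linear_combination (-1 : ℤ) * ih

/-- The inverse branch of `Tⁿ` on the cylinder `Iₙ(d₁,…,dₙ)`. -/
noncomputable def cylMap (d : ℕ → ℕ) (n : ℕ) (t : ℝ) : ℝ :=
  ((contP d (n + 1) : ℝ) + t * contP d n) / ((contQ d (n + 1) : ℝ) + t * contQ d n)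

lemma cylMap_denom_pos (hd : ∀ i, 1 ≤ d i) (n : ℕ) {t : ℝ} (ht : 0 ≤ t) :
    0 < (contQ d (n + 1) : ℝ) + t * contQ d n := by
  have : (0 : ℝ) < contQ d (n + 1) := by exact_mod_cast contQ_succ_pos hd n
  positivity

lemma cylMap_succ (hd : ∀ i, 1 ≤ d i) (n : ℕ) {s : ℝ} (hs : 0 ≤ s) :
    cylMap d (n + 1) s = cylMap d n ((d (n + 1) + s)⁻¹) := by
  have hk : (0 : ℝ) < d (n + 1) + s := by
    have : (1 : ℝ) ≤ d (n + 1) := by exact_mod_cast hd (n + 1)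
    linarith
  have hden := cylMap_denom_pos hd n (inv_nonneg.mpr hk.le)
  have hden' := cylMap_denom_pos hd (n + 1) hs
  simp only [cylMap, contP, contQ] at hden' ⊢
  push_cast at hden' ⊢
  rw [div_eq_div_iff hden'.ne' hden.ne']
  field_simp
  ring

lemma cylMap_sub_cylMap (hd : ∀ i, 1 ≤ d i) (n : ℕ) {s u : ℝ} (hs : 0 ≤ s) (hu : 0 ≤ u) :
    cylMap d n u - cylMap d n s = (-1) ^ n * (u - s) /
      (((contQ d (n + 1) : ℝ) + s * contQ d n) * ((contQ d (n + 1) : ℝ) + u * contQ d n)) := by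
  have hdet : (contP d n : ℝ) * contQ d (n + 1) - contP d (n + 1) * contQ d n = (-1) ^ n := by
    exact_mod_cast contP_mul_contQ_succ_sub d n
  have hds := cylMap_denom_pos hd n hs
  have hdu := cylMap_denom_pos hd n hu
  rw [cylMap, cylMap, div_sub_div _ _ hdu.ne' hds.ne',
    div_eq_div_iff (by positivity) (by positivity)]
  linear_combination (u - s) *
    (((contQ d (n + 1) : ℝ) + s * contQ d n) * ((contQ d (n + 1) : ℝ) + u * contQ d n)) * hdet

lemma continuousOn_cylMap (hd : ∀ i, 1 ≤ d i) (n : ℕ) : ContinuousOn (cylMap d n) (Ici 0) := by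
  refine ContinuousOn.div (by fun_prop) (by fun_prop) fun t ht => ?_
  exact (cylMap_denom_pos hd n ht).ne'

lemma cylMap_strictMonoOn_or_strictAntiOn (hd : ∀ i, 1 ≤ d i) (n : ℕ) :
    StrictMonoOn (cylMap d n) (Ici 0) ∨ StrictAntiOn (cylMap d n) (Ici 0) := by
  have hquot : ∀ s ∈ Ici (0 : ℝ), ∀ u ∈ Ici (0 : ℝ), s < u →
      0 < (u - s) /
        (((contQ d (n + 1) : ℝ) + s * contQ d n) * ((contQ d (n + 1) : ℝ) + u * contQ d n)) :=
    fun s hs u hu hsu =>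
      div_pos (sub_pos.mpr hsu) (mul_pos (cylMap_denom_pos hd n hs) (cylMap_denom_pos hd n hu))
  rcases Nat.even_or_odd n with hn | hn
  · refine Or.inl fun s hs u hu hsu => sub_pos.mp ?_
    rw [cylMap_sub_cylMap hd n hs hu, hn.neg_one_pow, one_mul]
    exact hquot s hs u hu hsu
  · refine Or.inr fun s hs u hu hsu => sub_pos.mp ?_
    rw [← neg_sub, cylMap_sub_cylMap hd n hs hu, hn.neg_one_pow, neg_one_mul, neg_div, neg_neg]
    exact hquot s hs u hu hsu

end ContinuedFraction

lemma volume_eq_of_image_Ioo_subset_of_subset_image_Icc {f : ℝ → ℝ} {a b : ℝ} {K : Set ℝ}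
    (hab : a ≤ b) (hf : ContinuousOn f (Icc a b))
    (hmono : StrictMonoOn f (Icc a b) ∨ StrictAntiOn f (Icc a b))
    (hIoo : f '' Ioo a b ⊆ K) (hIcc : K ⊆ f '' Icc a b) :
    volume K = ENNReal.ofReal |f b - f a| := by
  rcases hmono with hmono | hmono
  · rw [hf.image_Ioo_of_strictMonoOn hab hmono] at hIoo
    rw [hf.image_Icc_of_monotoneOn hab hmono.monotoneOn] at hIcc
    have hfab : f a ≤ f b := hmono.monotoneOn (left_mem_Icc.2 hab) (right_mem_Icc.2 hab) hab
    rw [abs_of_nonneg (sub_nonneg.2 hfab)]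
    exact le_antisymm (Real.volume_Icc ▸ measure_mono hIcc) (Real.volume_Ioo ▸ measure_mono hIoo)
  · rw [hf.image_Ioo_of_strictAntiOn hab hmono] at hIoo
    rw [hf.image_Icc_of_antitoneOn hab hmono.antitoneOn] at hIcc
    have hfab : f b ≤ f a := hmono.antitoneOn (left_mem_Icc.2 hab) (right_mem_Icc.2 hab) hab
    rw [abs_sub_comm, abs_of_nonneg (sub_nonneg.2 hfab)]
    exact le_antisymm (Real.volume_Icc ▸ measure_mono hIcc) (Real.volume_Ioo ▸ measure_mono hIoo)

lemma gaussMap_inv_natCast_add (k : ℕ) {s : ℝ} (hs : s ∈ Ico 0 1) : gaussMap (k + s)⁻¹ = s := by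
  rw [gaussMap, inv_inv, Int.fract_natCast_add, Int.fract_eq_self.mpr hs]

lemma inv_natFloor_inv_add_gaussMap {t : ℝ} (ht : 0 < t) : (⌊t⁻¹⌋₊ + gaussMap t)⁻¹ = t := by
  rw [gaussMap, natCast_floor_eq_intCast_floor (inv_nonneg.mpr ht.le), Int.floor_add_fract, inv_inv]

lemma le_natFloor_inv_iff {M : ℕ} (hM : 1 ≤ M) {t : ℝ} (ht : 0 ≤ t) :
    M ≤ ⌊t⁻¹⌋₊ ↔ 0 < t ∧ t ≤ (M : ℝ)⁻¹ := by
  have hM' : (0 : ℝ) < M := by exact_mod_cast hM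
  rw [Nat.le_floor_iff (inv_nonneg.mpr ht)]
  rcases ht.eq_or_lt with rfl | ht
  · simp; omega
  · simp [ht, le_inv_comm₀ hM' ht]

lemma gaussMap_iterate_mem_Ico {x : ℝ} (hx : x ∈ Ico 0 1) : ∀ n, gaussMap^[n] x ∈ Ico 0 1
  | 0 => hx
  | n + 1 => by
    rw [Function.iterate_succ_apply']
    exact ⟨Int.fract_nonneg _, Int.fract_lt_one _⟩

lemma cfA_succ (x : ℝ) (n : ℕ) : cfA x (n + 1) = ⌊(gaussMap^[n] x)⁻¹⌋₊ := rfl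

lemma mem_cyl_succ {n : ℕ} {d : ℕ → ℕ} {x : ℝ} :
    x ∈ cyl (n + 1) d ↔ x ∈ cyl n d ∧ cfA x (n + 1) = d (n + 1) := by
  simp only [cyl, mem_ofPred_eq]
  constructor
  · rintro ⟨hx, h⟩
    exact ⟨⟨hx, fun i hi hin => h i hi (by omega)⟩, h (n + 1) (by omega) le_rfl⟩
  · rintro ⟨⟨hx, h⟩, hlast⟩
    refine ⟨hx, fun i hi hin => ?_⟩
    rcases (Nat.le_succ_iff.mp hin) with hin | rfl
    exacts [h i hi hin, hlast]

section Parametrization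

variable {d : ℕ → ℕ}

lemma cylMap_zero (t : ℝ) : cylMap d 0 t = t := by
  simp [cylMap, contP, contQ]

lemma inv_natCast_add_mem_Ioo {k : ℕ} (hk : 1 ≤ k) {s : ℝ} (hs : s ∈ Ioo 0 1) :
    ((k : ℝ) + s)⁻¹ ∈ Ioo 0 1 := by
  have : (1 : ℝ) < k + s := by
    have : (1 : ℝ) ≤ k := by exact_mod_cast hk
    linarith [hs.1]
  exact ⟨by positivity, inv_lt_one_of_one_lt₀ this⟩

lemma gaussMap_iterate_cylMap (hd : ∀ i, 1 ≤ d i) :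
    ∀ n, ∀ t ∈ Ioo (0 : ℝ) 1, gaussMap^[n] (cylMap d n t) = t
  | 0, t, _ => cylMap_zero t
  | n + 1, s, hs => by
    rw [cylMap_succ hd n hs.1.le, Function.iterate_succ_apply',
      gaussMap_iterate_cylMap hd n _ (inv_natCast_add_mem_Ioo (hd (n + 1)) hs),
      gaussMap_inv_natCast_add _ (Ioo_subset_Ico_self hs)]

lemma cylMap_mem_cyl (hd : ∀ i, 1 ≤ d i) : ∀ n, ∀ t ∈ Ioo (0 : ℝ) 1, cylMap d n t ∈ cyl n d
  | 0, t, ht => by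
    rw [cylMap_zero]
    exact ⟨Ioo_subset_Ico_self ht, fun i hi hi0 => by omega⟩
  | n + 1, s, hs => by
    have ht := inv_natCast_add_mem_Ioo (hd (n + 1)) hs
    rw [cylMap_succ hd n hs.1.le, mem_cyl_succ, cfA_succ, gaussMap_iterate_cylMap hd n _ ht,
      inv_inv, add_comm, Nat.floor_add_natCast hs.1.le, Nat.floor_eq_zero.mpr hs.2, zero_add,
      add_comm]
    exact ⟨cylMap_mem_cyl hd n _ ht, rfl⟩

lemma cylMap_gaussMap_iterate (hd : ∀ i, 1 ≤ d i) :
    ∀ n, ∀ x ∈ cyl n d, cylMap d n (gaussMap^[n] x) = x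
  | 0, x, _ => cylMap_zero x
  | n + 1, x, hx => by
    obtain ⟨hxn, hcf⟩ := mem_cyl_succ.mp hx
    have ht0 : 0 < gaussMap^[n] x :=
      ((le_natFloor_inv_iff (hd (n + 1)) (gaussMap_iterate_mem_Ico hxn.1 n).1).mp hcf.ge).1
    rw [cylMap_succ hd n (gaussMap_iterate_mem_Ico hxn.1 (n + 1)).1, Function.iterate_succ_apply',
      ← hcf, cfA_succ, inv_natFloor_inv_add_gaussMap ht0, cylMap_gaussMap_iterate hd n x hxn]

end Parametrization

section Volume

variable {d : ℕ → ℕ}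

lemma volume_eq_of_cylMap_image_Ioo_subset_of_subset_image_Icc (hd : ∀ i, 1 ≤ d i) (n : ℕ)
    {a b : ℝ} (ha : 0 ≤ a) (hab : a ≤ b) {K : Set ℝ}
    (hIoo : cylMap d n '' Ioo a b ⊆ K) (hIcc : K ⊆ cylMap d n '' Icc a b) :
    volume K = ENNReal.ofReal ((b - a) /
      (((contQ d (n + 1) : ℝ) + a * contQ d n) * ((contQ d (n + 1) : ℝ) + b * contQ d n))) := by
  have hsub : Icc a b ⊆ Ici 0 := fun t ht => ha.trans ht.1
  rw [volume_eq_of_image_Ioo_subset_of_subset_image_Icc hab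
      ((continuousOn_cylMap hd n).mono hsub)
      ((cylMap_strictMonoOn_or_strictAntiOn hd n).imp (·.mono hsub) (·.mono hsub)) hIoo hIcc,
    cylMap_sub_cylMap hd n ha (ha.trans hab), abs_div, abs_mul, abs_neg_one_pow, one_mul,
    abs_of_nonneg (sub_nonneg.2 hab),
    abs_of_pos (mul_pos (cylMap_denom_pos hd n ha) (cylMap_denom_pos hd n (ha.trans hab)))]

lemma volume_cyl (hd : ∀ i, 1 ≤ d i) (n : ℕ) :
    volume (cyl n d) =
      ENNReal.ofReal ((contQ d (n + 1) : ℝ) * (contQ d (n + 1) + contQ d n))⁻¹ := by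
  rw [volume_eq_of_cylMap_image_Ioo_subset_of_subset_image_Icc hd n le_rfl zero_le_one]
  · congr 1
    ring
  · rintro _ ⟨t, ht, rfl⟩
    exact cylMap_mem_cyl hd n t ht
  · intro x hx
    exact ⟨_, Ico_subset_Icc_self (gaussMap_iterate_mem_Ico hx.1 n),
      cylMap_gaussMap_iterate hd n x hx⟩

lemma volume_cyl_inter_le_cfA (hd : ∀ i, 1 ≤ d i) {M : ℕ} (hM : 1 ≤ M) (n : ℕ) :
    volume {x | x ∈ cyl n d ∧ M ≤ cfA x (n + 1)} =
      ENNReal.ofReal ((contQ d (n + 1) : ℝ) * (M * contQ d (n + 1) + contQ d n))⁻¹ := by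
  have hM' : (1 : ℝ) ≤ M := by exact_mod_cast hM
  rw [volume_eq_of_cylMap_image_Ioo_subset_of_subset_image_Icc hd n le_rfl
    (inv_nonneg.2 (zero_le_one.trans hM'))]
  · congr 1
    have : (0 : ℝ) < contQ d (n + 1) := by exact_mod_cast contQ_succ_pos hd n
    field_simp
    ring
  · rintro _ ⟨t, ht, rfl⟩
    have ht1 : t ∈ Ioo 0 1 := ⟨ht.1, ht.2.trans_le (inv_le_one_of_one_le₀ hM')⟩
    refine ⟨cylMap_mem_cyl hd n t ht1, ?_⟩
    rw [cfA_succ, gaussMap_iterate_cylMap hd n t ht1, le_natFloor_inv_iff hM ht.1.le]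
    exact ⟨ht.1, ht.2.le⟩
  · rintro x ⟨hx, hMx⟩
    rw [cfA_succ, le_natFloor_inv_iff hM (gaussMap_iterate_mem_Ico hx.1 n).1] at hMx
    exact ⟨_, ⟨hMx.1.le, hMx.2⟩, cylMap_gaussMap_iterate hd n x hx⟩

end Volume

lemma inv_mul_add_bounds {q q' M : ℝ} (hq : 0 < q) (hq' : 0 ≤ q') (hqq' : q' ≤ q) (hM : 1 ≤ M) :
    1 / M * (q * (q + q'))⁻¹ ≤ (q * (M * q + q'))⁻¹ ∧
      (q * (M * q + q'))⁻¹ ≤ 2 / M * (q * (q + q'))⁻¹ := by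
  have hM0 : 0 < M := zero_lt_one.trans_le hM
  have hMq : 0 < q * (M * q + q') := by positivity
  simp only [← one_div]
  rw [div_mul_div_comm, div_mul_div_comm, one_mul, mul_one]
  constructor
  · rw [div_le_div_iff₀ (by positivity) hMq]
    nlinarith [mul_le_mul_of_nonneg_left hM (mul_nonneg hq.le hq')]
  · rw [div_le_div_iff₀ hMq (by positivity)]
    nlinarith [mul_le_mul_of_nonneg_left hqq' (mul_nonneg hM0.le hq.le), mul_nonneg hq.le hq']

/-- `J = ⋃_{a_{n+1} ≥ M} I_{n+1}(a₁,…,aₙ,a_{n+1})` satisfies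
`(1/M)·L(Iₙ) ≤ L(J) ≤ (2/M)·L(Iₙ)`. -/
theorem cylinder_tail_measure (n M : ℕ) (hM : 1 ≤ M) (d : ℕ → ℕ)
    (hd : ∀ i, 1 ≤ d i) :
    1 / (M : ℝ) * (volume (cyl n d)).toReal
        ≤ (volume {x | x ∈ cyl n d ∧ M ≤ cfA x (n + 1)}).toReal ∧
      (volume {x | x ∈ cyl n d ∧ M ≤ cfA x (n + 1)}).toReal
        ≤ 2 / (M : ℝ) * (volume (cyl n d)).toReal := by
  have hq : (0 : ℝ) < contQ d (n + 1) := by exact_mod_cast contQ_succ_pos hd n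
  have hqq' : (contQ d n : ℝ) ≤ contQ d (n + 1) := by exact_mod_cast contQ_le_contQ_succ hd n
  rw [volume_cyl hd n, volume_cyl_inter_le_cfA hd hM n, ENNReal.toReal_ofReal (by positivity),
    ENNReal.toReal_ofReal (by positivity)]
  exact inv_mul_add_bounds hq (Nat.cast_nonneg _) hqq' (by exact_mod_cast hM)
end

section
/- (Chung–Erdős inequality) Let (Ω, A, μ) be a finite measure space and (E_n)_{n≥1} measurable sets with Σ_{n=1}^∞ μ(E_n) = ∞. Then μ(limsup_n E_n) ≥ limsup_{Q→∞} (Σ_{s=1}^Q μ(E_s))² / (Σ_{s,t=1}^Q μ(E_s ∩ E_t)). -/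
/-!
Cauchy–Schwarz applied to the counting function `∑_{s ∈ F} 1_{E_s}`, which vanishes off
`⋃_{s ∈ F} E_s`, gives `(∑_s μ E_s)² ≤ μ (⋃_{s ∈ F} E_s) · ∑_{s,t} μ (E_s ∩ E_t)`.
Taking `F = [N, Q]` bounds the quotient over `[N, Q]` by `μ (⋃_{n ≥ N} E_n)`. Since the partial
sums diverge, the finitely many indices below `N` change the quotient over `[1, Q]` at most by a
factor tending to `1`, and `μ (⋃_{n ≥ N} E_n) → μ (limsup E_n)` by continuity from above.
-/

open Filter MeasureTheory Topology
open scoped ENNReal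

section MeasureInequalities

variable {α : Type*} [MeasurableSpace α] {μ : Measure α}

theorem ENNReal.sq_lintegral_mul_le_lintegral_sq_mul_lintegral_sq {f g : α → ℝ≥0∞}
    (hf : AEMeasurable f μ) (hg : AEMeasurable g μ) :
    (∫⁻ x, f x * g x ∂μ) ^ 2 ≤ (∫⁻ x, f x ^ 2 ∂μ) * ∫⁻ x, g x ^ 2 ∂μ := by
  have h := ENNReal.lintegral_mul_le_Lp_mul_Lq μ Real.HolderConjugate.two_two hf hg
  simp only [Pi.mul_apply, ENNReal.rpow_two] at h
  calc (∫⁻ x, f x * g x ∂μ) ^ 2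
      ≤ ((∫⁻ x, f x ^ 2 ∂μ) ^ (1 / 2 : ℝ) * (∫⁻ x, g x ^ 2 ∂μ) ^ (1 / 2 : ℝ)) ^ 2 := by gcongr
    _ = (∫⁻ x, f x ^ 2 ∂μ) * ∫⁻ x, g x ^ 2 ∂μ := by
      rw [mul_pow, ← ENNReal.rpow_two, ← ENNReal.rpow_two, ← ENNReal.rpow_mul, ← ENNReal.rpow_mul]
      norm_num

theorem sq_lintegral_le_measure_mul_lintegral_sq {f : α → ℝ≥0∞} (hf : AEMeasurable f μ)
    {s : Set α} (hfs : Function.support f ⊆ s) :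
    (∫⁻ x, f x ∂μ) ^ 2 ≤ μ s * ∫⁻ x, f x ^ 2 ∂μ := by
  have h := ENNReal.sq_lintegral_mul_le_lintegral_sq_mul_lintegral_sq (μ := μ.restrict s)
    hf.restrict aemeasurable_const (g := 1)
  simp only [Pi.one_apply, mul_one, one_pow, lintegral_one, Measure.restrict_apply_univ] at h
  rw [← setLIntegral_eq_of_support_subset hfs, mul_comm]
  exact h.trans (mul_le_mul_left (setLIntegral_le_lintegral s _) _)

section Indicators

variable {ι : Type*} {E : ι → Set α}

theorem lintegral_sum_indicator_one (hE : ∀ i, MeasurableSet (E i)) (F : Finset ι) :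
    ∫⁻ x, ∑ i ∈ F, (E i).indicator 1 x ∂μ = ∑ i ∈ F, μ (E i) := by
  rw [lintegral_finsetSum _ fun i _ => measurable_one.indicator (hE i)]
  exact Finset.sum_congr rfl fun i _ => lintegral_indicator_one (hE i)

theorem lintegral_sq_sum_indicator_one (hE : ∀ i, MeasurableSet (E i)) (F : Finset ι) :
    ∫⁻ x, (∑ i ∈ F, (E i).indicator 1 x) ^ 2 ∂μ = ∑ i ∈ F, ∑ j ∈ F, μ (E i ∩ E j) := by
  have hmul : ∀ i j x, (E i).indicator (1 : α → ℝ≥0∞) x * (E j).indicator 1 x =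
      (E i ∩ E j).indicator 1 x := fun i j x => by rw [Set.inter_indicator_one]; rfl
  simp_rw [sq, Finset.sum_mul_sum, hmul]
  rw [lintegral_finsetSum _ fun i _ => Finset.measurable_sum _ fun j _ =>
    measurable_one.indicator ((hE i).inter (hE j))]
  exact Finset.sum_congr rfl fun i _ => lintegral_sum_indicator_one (fun j => (hE i).inter (hE j)) F

theorem sq_sum_measure_le_measure_biUnion_mul (hE : ∀ i, MeasurableSet (E i)) (F : Finset ι) :
    (∑ i ∈ F, μ (E i)) ^ 2 ≤ μ (⋃ i ∈ F, E i) * ∑ i ∈ F, ∑ j ∈ F, μ (E i ∩ E j) := by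
  rw [← lintegral_sum_indicator_one hE, ← lintegral_sq_sum_indicator_one hE]
  refine sq_lintegral_le_measure_mul_lintegral_sq
    (Finset.measurable_sum _ fun i _ => measurable_one.indicator (hE i)).aemeasurable ?_
  intro x hx
  obtain ⟨i, hi, hxi⟩ := Finset.exists_ne_zero_of_sum_ne_zero hx
  exact Set.mem_biUnion hi (Set.mem_of_indicator_ne_zero hxi)

theorem sq_sum_measureReal_le_measureReal_biUnion_mul [IsFiniteMeasure μ]
    (hE : ∀ i, MeasurableSet (E i)) (F : Finset ι) :
    (∑ i ∈ F, μ.real (E i)) ^ 2 ≤ μ.real (⋃ i ∈ F, E i) * ∑ i ∈ F, ∑ j ∈ F, μ.real (E i ∩ E j) := by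
  have h := ENNReal.toReal_mono (by simp [ENNReal.mul_eq_top])
    (sq_sum_measure_le_measure_biUnion_mul (μ := μ) hE F)
  simpa [ENNReal.toReal_sum, ENNReal.toReal_mul, measureReal_def] using h

end Indicators

theorem tendsto_measureReal_biUnion_ge_limsup [IsFiniteMeasure μ] {E : ℕ → Set α}
    (hE : ∀ n, NullMeasurableSet (E n) μ) :
    Tendsto (fun N => μ.real (⋃ n ≥ N, E n)) atTop (𝓝 (μ.real (limsup E atTop))) := by
  rw [limsup_eq_iInf_iSup_of_nat]
  refine (ENNReal.tendsto_toReal (measure_ne_top μ _)).comp (tendsto_measure_iInter_atTop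
    (fun N => .iUnion fun n => .iUnion fun _ => hE n) ?_ ⟨0, measure_ne_top μ _⟩)
  exact fun M N hMN => Set.biUnion_subset_biUnion_left fun n hn => le_trans hMN hn

end MeasureInequalities

theorem limsup_sq_div_le_of_tail {ι : Type*} {l : Filter ι} [l.NeBot] {A A' B B' : ι → ℝ} {c D : ℝ}
    (hD : 0 ≤ D) (hA : ∀ᶠ i in l, A i = c + A' i) (hA' : Tendsto A' l atTop)
    (hB : ∀ᶠ i in l, B' i ≤ B i) (hsq : ∀ᶠ i in l, A' i ^ 2 ≤ D * B' i) :
    limsup (fun i => A i ^ 2 / B i) l ≤ D := by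
  have hlim : Tendsto (fun i => (1 + c / A' i) ^ 2 * D) l (𝓝 D) := by
    simpa using (((tendsto_const_nhds.div_atTop hA').const_add 1).pow 2).mul_const D
  have hbound : ∀ᶠ i in l, 0 ≤ A i ^ 2 / B i ∧ A i ^ 2 / B i ≤ (1 + c / A' i) ^ 2 * D := by
    filter_upwards [hA, hB, hsq, hA'.eventually_gt_atTop 0] with i hAi hBi hsqi hA'i
    have hB'i : 0 < B' i := pos_of_mul_pos_right ((pow_pos hA'i 2).trans_le hsqi) hD
    refine ⟨div_nonneg (sq_nonneg _) (hB'i.le.trans hBi), ?_⟩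
    calc A i ^ 2 / B i ≤ (c + A' i) ^ 2 / B' i := by rw [hAi]; gcongr
      _ = (1 + c / A' i) ^ 2 * (A' i ^ 2 / B' i) := by field_simp; ring
      _ ≤ (1 + c / A' i) ^ 2 * D := by gcongr; exact div_le_of_le_mul₀ hB'i.le hD (by linarith)
  calc limsup (fun i => A i ^ 2 / B i) l
      ≤ limsup (fun i => (1 + c / A' i) ^ 2 * D) l :=
        limsup_le_limsup (hbound.mono fun _ h => h.2)
          (isCoboundedUnder_le_of_eventually_le l (hbound.mono fun _ h => h.1))
          hlim.isBoundedUnder_le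
    _ = D := hlim.limsup_eq

theorem tendsto_sum_Icc_atTop_of_not_summable {g : ℕ → ℝ} (hg : ∀ n, 0 ≤ g n)
    (h : ¬Summable g) (N : ℕ) : Tendsto (fun Q => ∑ n ∈ Finset.Icc N Q, g n) atTop atTop := by
  have hshift : Tendsto (fun k => ∑ n ∈ Finset.range k, g (N + n)) atTop atTop := by
    refine (not_summable_iff_tendsto_nat_atTop_of_nonneg fun n => hg _).mp ?_
    simpa only [add_comm N] using mt (summable_nat_add_iff N).mp h
  refine (hshift.comp (tendsto_sub_atTop_nat N |>.comp (tendsto_add_atTop_nat 1))).congr fun Q => ?_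
  simp [← Finset.Ico_add_one_right_eq_Icc, Finset.sum_Ico_eq_sum_range]

/-- Chung–Erdős inequality: if `(Ω, μ)` is a finite measure space and
`(Eₙ)` are measurable sets with `Σ μ(Eₙ) = ∞`, then
`μ(limsup Eₙ) ≥ limsup_Q (Σ_{s≤Q} μ(Eₛ))² / (Σ_{s,t≤Q} μ(Eₛ ∩ Eₜ))`. -/
theorem chung_erdos {Ω : Type*} [MeasurableSpace Ω] (μ : Measure Ω) [IsFiniteMeasure μ]
    (E : ℕ → Set Ω) (hE : ∀ n, MeasurableSet (E n))
    (hdiv : ∑' n : ℕ, μ (E n) = ⊤) :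
    Filter.limsup (fun Q : ℕ =>
        (∑ s ∈ Finset.Icc 1 Q, (μ (E s)).toReal) ^ 2 /
          ∑ s ∈ Finset.Icc 1 Q, ∑ t ∈ Finset.Icc 1 Q, (μ (E s ∩ E t)).toReal) atTop
      ≤ (μ (Filter.limsup E atTop)).toReal := by
  simp only [← measureReal_def]
  have hnot : ¬Summable fun n => μ.real (E n) := fun hs => by
    simpa [measureReal_def, hdiv] using
      ENNReal.ofReal_tsum_of_nonneg (fun n => measureReal_nonneg) hs
  refine ge_of_tendsto (tendsto_measureReal_biUnion_ge_limsup fun n => (hE n).nullMeasurableSet)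
    ((eventually_ge_atTop 1).mono fun N hN => ?_)
  refine limsup_sq_div_le_of_tail (c := ∑ s ∈ Finset.Ico 1 N, μ.real (E s))
    (B' := fun Q => ∑ s ∈ Finset.Icc N Q, ∑ t ∈ Finset.Icc N Q, μ.real (E s ∩ E t))
    measureReal_nonneg ?_
    (tendsto_sum_Icc_atTop_of_not_summable (fun n => measureReal_nonneg) hnot N) ?_ ?_
  · filter_upwards [eventually_ge_atTop N] with Q hQ
    simp only [← Finset.Ico_add_one_right_eq_Icc]
    exact (Finset.sum_Ico_consecutive _ hN (by omega)).symm
  · refine Eventually.of_forall fun Q => ?_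
    have hsub : Finset.Icc N Q ⊆ Finset.Icc 1 Q := Finset.Icc_subset_Icc_left hN
    simp only [← Finset.sum_product']
    exact Finset.sum_le_sum_of_subset_of_nonneg (Finset.product_subset_product hsub hsub)
      fun _ _ _ => measureReal_nonneg
  · refine Eventually.of_forall fun Q => ?_
    refine (sq_sum_measureReal_le_measureReal_biUnion_mul hE _).trans ?_
    refine mul_le_mul_of_nonneg_right (measureReal_mono ?_ (measure_ne_top μ _)) (by positivity)
    exact Set.biUnion_subset_biUnion_left fun n (hn : n ∈ Finset.Icc N Q) =>
      (Finset.mem_Icc.mp hn).1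
end

section
/- Let I ⊂ ℝ be a bounded interval, E ⊂ I a Lebesgue measurable set, and C a class of subintervals of I such that (1) every open subinterval of I is an at most countable union of disjoint elements of C, and (2) there is a constant ρ > 0 with L(C ∩ E) ≥ ρ·L(C) for every C ∈ C. Then L(E) = L(I). -/
/-!
Replacing `E` by a measurable hull, the disjoint covers by members of `𝒞` give
`L(J ∩ E) ≥ ρ L(J)` on every open interval `J ⊆ I`. At a Lebesgue density point of
`interior I \ E`, this set would fill a proportion at most `1 - ρ` of every small ball
around the point, which is impossible; so `interior I \ E` is null, and so is the frontier
of the interval `I`.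
-/

open Set Filter Topology ENNReal Function MeasureTheory

namespace MeasureTheory

theorem measure_iUnion_inter_eq_tsum {α ι : Type*} [MeasurableSpace α] [Countable ι]
    {μ : Measure α} {f : ι → Set α} (hd : Pairwise (Disjoint on f))
    (hm : ∀ i, MeasurableSet (f i)) (E : Set α) :
    μ ((⋃ i, f i) ∩ E) = ∑' i, μ (f i ∩ E) := by
  rw [inter_comm, ← Measure.restrict_apply' (.iUnion hm), Measure.restrict_iUnion hd hm,
    Measure.sum_apply_of_countable]
  simp only [Measure.restrict_apply' (hm _), inter_comm]

theorem mul_measure_iUnion_le_measure_iUnion_inter {α ι : Type*} [MeasurableSpace α]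
    [Countable ι] {μ : Measure α} {f : ι → Set α} (hd : Pairwise (Disjoint on f))
    (hm : ∀ i, MeasurableSet (f i)) {E : Set α} {c : ℝ≥0∞}
    (h : ∀ i, c * μ (f i) ≤ μ (f i ∩ E)) :
    c * μ (⋃ i, f i) ≤ μ ((⋃ i, f i) ∩ E) := by
  rw [measure_iUnion hd hm, measure_iUnion_inter_eq_tsum hd hm, ← ENNReal.tsum_mul_left]
  exact ENNReal.tsum_le_tsum h

end MeasureTheory

theorem Real.volume_closedBall_diff_le_of_le_volume_Ioo_inter {E : Set ℝ}
    (hE : MeasurableSet E) {c : ℝ≥0∞} {x r : ℝ}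
    (h : c * volume (Ioo (x - r) (x + r)) ≤ volume (Ioo (x - r) (x + r) ∩ E)) :
    volume (Metric.closedBall x r \ E) ≤ (1 - c) * volume (Metric.closedBall x r) := by
  have hV : volume (Icc (x - r) (x + r)) = volume (Ioo (x - r) (x + r)) := by
    rw [Real.volume_Icc, Real.volume_Ioo]
  have hcE : c * volume (Icc (x - r) (x + r)) ≤ volume (Icc (x - r) (x + r) ∩ E) :=
    hV ▸ h.trans (measure_mono (inter_subset_inter_left _ Ioo_subset_Icc_self))
  have hfin : volume (Icc (x - r) (x + r) ∩ E) ≠ ∞ :=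
    ((measure_mono inter_subset_left).trans_lt measure_Icc_lt_top).ne
  rw [Real.closedBall_eq_Icc]
  calc volume (Icc (x - r) (x + r) \ E)
      = volume (Icc (x - r) (x + r)) - volume (Icc (x - r) (x + r) ∩ E) :=
        ENNReal.eq_sub_of_add_eq hfin (by rw [add_comm, measure_inter_add_sdiff _ hE])
    _ ≤ volume (Icc (x - r) (x + r)) - c * volume (Icc (x - r) (x + r)) :=
        tsub_le_tsub_left hcE _
    _ = (1 - c) * volume (Icc (x - r) (x + r)) := by
        rw [ENNReal.sub_mul fun _ _ => measure_Icc_lt_top.ne, one_mul]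

theorem Real.volume_diff_eq_zero_of_forall_Ioo_subset {U E : Set ℝ} (hU : IsOpen U)
    (hE : MeasurableSet E) {c : ℝ≥0∞} (hc : c ≠ 0)
    (h : ∀ a b, Ioo a b ⊆ U → c * volume (Ioo a b) ≤ volume (Ioo a b ∩ E)) :
    volume (U \ E) = 0 := by
  by_contra hF
  obtain ⟨x, ⟨hxU, -⟩, hx⟩ := Measure.exists_mem_of_measure_ne_zero_of_ae hF
    (Besicovitch.ae_tendsto_measure_inter_div volume (U \ E))
  obtain ⟨ε, hε, hball⟩ := Metric.isOpen_iff.1 hU x hxU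
  have hsmall : ∀ r ∈ Ioo 0 ε,
      volume ((U \ E) ∩ Metric.closedBall x r) / volume (Metric.closedBall x r) ≤ 1 - c := by
    intro r hr
    have hsub : (U \ E) ∩ Metric.closedBall x r ⊆ Metric.closedBall x r \ E :=
      fun y hy => ⟨hy.2, hy.1.2⟩
    refine ENNReal.div_le_of_le_mul ((measure_mono hsub).trans
      (volume_closedBall_diff_le_of_le_volume_Ioo_inter hE (h _ _ ?_)))
    rw [← Real.ball_eq_Ioo]
    exact (Metric.ball_subset_ball hr.2.le).trans hball
  have hle : (1 : ℝ≥0∞) ≤ 1 - c :=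
    le_of_tendsto hx (eventually_of_mem (Ioo_mem_nhdsGT hε) hsmall)
  exact hle.not_gt (ENNReal.sub_lt_self one_ne_top one_ne_zero hc)

theorem knopp_full_measure_general (I : Set ℝ) (hIint : I.OrdConnected)
    (E : Set ℝ) (hEI : E ⊆ I)
    (𝒞 : Set (Set ℝ)) (h𝒞 : ∀ C ∈ 𝒞, C ⊆ I ∧ C.OrdConnected)
    (hcover : ∀ a b : ℝ, Set.Ioo a b ⊆ I → ∃ f : ℕ → Set ℝ,
      (∀ n, f n ∈ 𝒞 ∨ f n = ∅) ∧ Pairwise (Function.onFun Disjoint f) ∧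
        Set.Ioo a b = ⋃ n, f n)
    (ρ : ℝ) (hρ : 0 < ρ)
    (hdense : ∀ C ∈ 𝒞, ENNReal.ofReal ρ * volume C ≤ volume (C ∩ E)) :
    volume E = volume I := by
  set G := toMeasurable volume E
  have hG : ∀ C ∈ 𝒞, ENNReal.ofReal ρ * volume C ≤ volume (C ∩ G) := fun C hC =>
    (hdense C hC).trans (measure_mono (inter_subset_inter_right _ (subset_toMeasurable _ _)))
  have hIoo : ∀ a b, Ioo a b ⊆ interior I →
      ENNReal.ofReal ρ * volume (Ioo a b) ≤ volume (Ioo a b ∩ G) := by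
    intro a b hab
    obtain ⟨f, hf𝒞, hd, hf⟩ := hcover a b (hab.trans interior_subset)
    have hm : ∀ n, MeasurableSet (f n) := fun n =>
      (hf𝒞 n).elim (fun h => (h𝒞 _ h).2.measurableSet) fun h => h ▸ .empty
    rw [hf]
    refine mul_measure_iUnion_le_measure_iUnion_inter hd hm fun n => ?_
    rcases hf𝒞 n with h | h
    · exact hG _ h
    · simp [h]
  have hnull : volume (interior I \ G) = 0 :=
    Real.volume_diff_eq_zero_of_forall_Ioo_subset isOpen_interior
      (measurableSet_toMeasurable _ _) (ENNReal.ofReal_pos.2 hρ).ne' hIoo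
  have hfront : volume (frontier I) = 0 := hIint.convex.addHaar_frontier volume
  refine le_antisymm (measure_mono hEI) ?_
  calc volume I = volume (interior I) :=
        measure_congr (interior_ae_eq_of_null_frontier hfront).symm
    _ ≤ volume G := measure_mono_ae (ae_le_set.2 hnull)
    _ = volume E := measure_toMeasurable E

/-- Knopp-type full-measure criterion: let `I ⊆ ℝ` be a bounded interval,
`E ⊆ I` measurable, and `𝒞` a family of subintervals of `I` such that every open
subinterval of `I` is an at most countable disjoint union of members of `𝒞`, and
`L(C ∩ E) ≥ ρ L(C)` for every `C ∈ 𝒞`. Then `L(E) = L(I)`. -/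
theorem knopp_full_measure (I : Set ℝ) (hIint : I.OrdConnected)
    (hIbdd : Bornology.IsBounded I) (E : Set ℝ) (hE : MeasurableSet E) (hEI : E ⊆ I)
    (𝒞 : Set (Set ℝ)) (h𝒞 : ∀ C ∈ 𝒞, C ⊆ I ∧ C.OrdConnected)
    (hcover : ∀ a b : ℝ, Set.Ioo a b ⊆ I → ∃ f : ℕ → Set ℝ,
      (∀ n, f n ∈ 𝒞 ∨ f n = ∅) ∧ Pairwise (Function.onFun Disjoint f) ∧
        Set.Ioo a b = ⋃ n, f n)
    (ρ : ℝ) (hρ : 0 < ρ)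
    (hdense : ∀ C ∈ 𝒞, ENNReal.ofReal ρ * volume C ≤ volume (C ∩ E)) :
    volume E = volume I :=
  knopp_full_measure_general I hIint E hEI 𝒞 h𝒞 hcover ρ hρ hdense
end
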